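/- Let X and Y be independent exponential random variables with means m_x > 0 and m_y > 0. Then for every u ≥ 0, the cumulative distribution function of the ratio X/(Y+1) satisfies ℙ( X/(Y + 1) ≤ u ) = 1 − ( m_x/(m_x + u·m_y) )·exp(−u/m_x). -/

import Mathlib

/-!
Complementing, `ℙ(X/(Y+1) > u) = ℙ(X > u(Y+1))` because `Y ≥ 0` almost surely. Conditioning on
`Y`, the exponential tail gives `ℙ(X > t) = e^{-t/m_x}`, so this probability is
`e^{-u/m_x} 𝔼[e^{-(u/m_x) Y}]`. The Laplace transform of the exponential law of rate `λ` at `s`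
is `λ/(λ+s)`, because `e^{-sx}` times the rate-`λ` density is `λ/(λ+s)` times the
rate-`(λ+s)` density.
-/

open MeasureTheory ProbabilityTheory Real

namespace ProbabilityTheory

open Set

lemma expMeasure_eq_withDensity (r : ℝ) :
    expMeasure r = volume.withDensity (exponentialPDF r) := rfl

instance (r : ℝ) : SFinite (expMeasure r) := by
  rw [expMeasure_eq_withDensity]
  infer_instance

@[fun_prop]
lemma measurable_exponentialPDF (r : ℝ) : Measurable (exponentialPDF r) :=
  (measurable_exponentialPDFReal r).ennreal_ofReal

lemma ae_nonneg_expMeasure (r : ℝ) : ∀ᵐ x ∂expMeasure r, 0 ≤ x := by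
  simp only [ae_iff, not_le]
  show expMeasure r (Iio 0) = 0
  rw [expMeasure_eq_withDensity, withDensity_apply _ measurableSet_Iio]
  exact lintegral_exponentialPDF_of_nonpos le_rfl

lemma expMeasure_Ioi {r t : ℝ} (hr : 0 < r) (ht : 0 ≤ t) :
    expMeasure r (Ioi t) = ENNReal.ofReal (exp (-(r * t))) := by
  have : IsProbabilityMeasure (expMeasure r) := isProbabilityMeasure_expMeasure hr
  have hexp : exp (-(r * t)) ≤ 1 := exp_le_one_iff.mpr (by nlinarith)
  rw [← compl_Iic, prob_compl_eq_one_sub measurableSet_Iic, expMeasure_eq_withDensity,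
    withDensity_apply _ measurableSet_Iic, lintegral_exponentialPDF_eq_antiDeriv hr, if_pos ht,
    ← ENNReal.ofReal_one, ← ENNReal.ofReal_sub _ (by linarith), sub_sub_cancel]

lemma exponentialPDF_mul_exp_neg {r s : ℝ} (hr : 0 ≤ r) (hrs : 0 < r + s) (x : ℝ) :
    exponentialPDF r x * ENNReal.ofReal (exp (-(s * x))) =
      ENNReal.ofReal (r / (r + s)) * exponentialPDF (r + s) x := by
  rcases lt_or_ge x 0 with hx | hx
  · simp [exponentialPDF_of_neg hx]
  · rw [exponentialPDF_of_nonneg hx, exponentialPDF_of_nonneg hx,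
      ← ENNReal.ofReal_mul (by positivity), ← ENNReal.ofReal_mul (by positivity)]
    congr 1
    rw [div_mul_eq_mul_div, mul_div_assoc, mul_assoc, ← exp_add]
    field_simp
    ring_nf

lemma lintegral_exp_neg_mul_expMeasure {r s : ℝ} (hr : 0 ≤ r) (hrs : 0 < r + s) :
    ∫⁻ x, ENNReal.ofReal (exp (-(s * x))) ∂expMeasure r = ENNReal.ofReal (r / (r + s)) := by
  rw [expMeasure_eq_withDensity,
    lintegral_withDensity_eq_lintegral_mul _ (by fun_prop) (by fun_prop)]
  simp only [Pi.mul_apply, exponentialPDF_mul_exp_neg hr hrs]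
  rw [lintegral_const_mul _ (by fun_prop), lintegral_exponentialPDF_eq_one hrs, mul_one]

lemma prod_expMeasure_setOf_lt (ν : Measure ℝ) [SFinite ν] {r : ℝ} (hr : 0 < r)
    {g : ℝ → ℝ} (hg : Measurable g) (hg_nonneg : ∀ᵐ y ∂ν, 0 ≤ g y) :
    ν.prod (expMeasure r) {p | g p.1 < p.2} =
      ∫⁻ y, ENNReal.ofReal (exp (-(r * g y))) ∂ν := by
  rw [Measure.prod_apply (measurableSet_lt (by fun_prop) measurable_snd)]
  refine lintegral_congr_ae ?_
  filter_upwards [hg_nonneg] with y hy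
  exact expMeasure_Ioi hr hy

lemma prod_expMeasure_setOf_mul_add_one_lt {a b u : ℝ} (ha : 0 < a) (hb : 0 < b) (hu : 0 ≤ u) :
    (expMeasure b).prod (expMeasure a) {p | u * (p.1 + 1) < p.2} =
      ENNReal.ofReal (b / (b + a * u) * exp (-(a * u))) := by
  calc (expMeasure b).prod (expMeasure a) {p | u * (p.1 + 1) < p.2}
      = ∫⁻ y, ENNReal.ofReal (exp (-(a * (u * (y + 1))))) ∂expMeasure b := by
        refine prod_expMeasure_setOf_lt (g := fun y ↦ u * (y + 1)) _ ha (by fun_prop) ?_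
        filter_upwards [ae_nonneg_expMeasure b] with y hy
        positivity
    _ = ENNReal.ofReal (exp (-(a * u))) *
          ∫⁻ y, ENNReal.ofReal (exp (-(a * u * y))) ∂expMeasure b := by
        rw [← lintegral_const_mul _ (by fun_prop)]
        congr! 2 with y
        rw [← ENNReal.ofReal_mul (exp_pos _).le, ← exp_add]
        ring_nf
    _ = ENNReal.ofReal (b / (b + a * u) * exp (-(a * u))) := by
        rw [lintegral_exp_neg_mul_expMeasure hb.le (by positivity),
          ← ENNReal.ofReal_mul (exp_pos _).le, mul_comm]

end ProbabilityTheory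

/-- **CDF of `γ_R = X/(Y+1)` (Appendix D).** For independent exponentials `X, Y` with means
`m_x, m_y > 0` and `u ≥ 0`, `ℙ(X/(Y+1) ≤ u) = 1 - (m_x/(m_x + u m_y)) e^{-u/m_x}`. -/
theorem cdf_ratio_exponentials
    {Ω : Type*} [MeasurableSpace Ω] (μ : Measure Ω) [IsProbabilityMeasure μ]
    (X Y : Ω → ℝ) (hXm : Measurable X) (hYm : Measurable Y)
    (hindep : IndepFun X Y μ)
    (mx my : ℝ) (hmx : 0 < mx) (hmy : 0 < my)
    (hX : Measure.map X μ = expMeasure mx⁻¹)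
    (hY : Measure.map Y μ = expMeasure my⁻¹)
    (u : ℝ) (hu : 0 ≤ u) :
    (μ {ω | X ω / (Y ω + 1) ≤ u}).toReal =
      1 - (mx / (mx + u * my)) * Real.exp (-u / mx) := by
  have hY_nonneg : ∀ᵐ ω ∂μ, 0 ≤ Y ω :=
    ae_of_ae_map hYm.aemeasurable (hY ▸ ae_nonneg_expMeasure _)
  have hlaw :
      μ.map (fun ω ↦ (Y ω, X ω)) = (expMeasure my⁻¹).prod (expMeasure mx⁻¹) := by
    rw [← hX, ← hY]
    exact (indepFun_iff_map_prod_eq_prod_map_map hYm.aemeasurable hXm.aemeasurable).mp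
      hindep.symm
  have htail : μ {ω | u < X ω / (Y ω + 1)} =
      ENNReal.ofReal (mx / (mx + u * my) * exp (-u / mx)) := by
    calc μ {ω | u < X ω / (Y ω + 1)}
        = μ ((fun ω ↦ (Y ω, X ω)) ⁻¹' {p | u * (p.1 + 1) < p.2}) := by
          refine measure_congr (Filter.eventuallyEq_set.mpr ?_)
          filter_upwards [hY_nonneg] with ω hω
          exact lt_div_iff₀ (by linarith)
      _ = ENNReal.ofReal (my⁻¹ / (my⁻¹ + mx⁻¹ * u) * exp (-(mx⁻¹ * u))) := by
          rw [← Measure.map_apply (hYm.prodMk hXm)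
              (measurableSet_lt (by fun_prop) measurable_snd), hlaw,
            prod_expMeasure_setOf_mul_add_one_lt (inv_pos.mpr hmx) (inv_pos.mpr hmy) hu]
      _ = ENNReal.ofReal (mx / (mx + u * my) * exp (-u / mx)) := by
          rw [neg_div, inv_mul_eq_div]
          congr 2
          field_simp
  have hle : {ω | X ω / (Y ω + 1) ≤ u} = {ω | u < X ω / (Y ω + 1)}ᶜ := by
    ext ω; simp
  rw [← measureReal_def, hle,
    probReal_compl_eq_one_sub (measurableSet_lt measurable_const (by fun_prop)),
    measureReal_def, htail, ENNReal.toReal_ofReal (by positivity)]
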